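/- Let S ⊆ E^n be nonempty with density ρ(S) ≤ 1/2. If the characteristic function χ^S is a perfect 2-coloring of E^n, then nei(S) + 2(cor(S)+1)(1 − ρ(S)) = n. -/

import Mathlib

open Finset

/-- Weight of a vector in the Boolean cube: the number of ones. -/
def wt {n : ℕ} (y : Fin n → Bool) : ℕ := (Finset.univ.filter fun i => y i = true).card

/-- The face `E^n_y(z) = {x : [x,y] = [z,y]}`: all `x` agreeing with `z` on the
support of `y`. -/
def face {n : ℕ} (y z : Fin n → Bool) : Finset (Fin n → Bool) :=
  Finset.univ.filter fun x => ∀ i, y i = true → x i = z i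

/-- `χ^S` is correlation-immune of order `k`: all faces obtained by fixing `k`
coordinates (i.e. faces `E^n_y(z)` with `wt y = k`) intersect `S` in the same
cardinality. -/
def CorrImmune {n : ℕ} (S : Finset (Fin n → Bool)) (k : ℕ) : Prop :=
  ∀ y₁ z₁ y₂ z₂ : Fin n → Bool, wt y₁ = k → wt y₂ = k →
    (face y₁ z₁ ∩ S).card = (face y₂ z₂ ∩ S).card

/-- `cor S` : the maximum order of correlation immunity of `χ^S`. -/
noncomputable def cor {n : ℕ} (S : Finset (Fin n → Bool)) : ℕ :=
  sSup {k | k ≤ n ∧ CorrImmune S k}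

/-- Density `ρ(S) = |S| / 2^n`. -/
def rho {n : ℕ} (S : Finset (Fin n → Bool)) : ℚ := (S.card : ℚ) / 2 ^ n

/-- `nei S`: the average number of neighbors in `S` of vertices of `S`,
`(1/|S|) ∑_{x∈S} |B(x) ∩ S| - 1`, where `B x` is the Hamming ball of radius 1. -/
def nei {n : ℕ} (S : Finset (Fin n → Bool)) : ℚ :=
  (∑ x ∈ S, ((S.filter fun y => hammingDist x y ≤ 1).card : ℚ)) / (S.card : ℚ) - 1

/-- Characteristic function of `S`, as a rational-valued function. -/
def chi {n : ℕ} (S : Finset (Fin n → Bool)) (x : Fin n → Bool) : ℚ := if x ∈ S then 1 else 0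

/-- Characteristic function of `S` as a 2-coloring (color 1 = membership in `S`). -/
def chiCol {n : ℕ} (S : Finset (Fin n → Bool)) (x : Fin n → Bool) : Fin 2 :=
  if x ∈ S then 1 else 0

/-- `Col` is a perfect coloring with parameter matrix `A`: every vertex of color `i`
has exactly `A i j` neighbors (at Hamming distance 1) of color `j`. -/
def IsPerfectColoring {n : ℕ} (Col : (Fin n → Bool) → Fin 2) (A : Fin 2 → Fin 2 → ℕ) : Prop :=
  ∀ x : Fin n → Bool, ∀ j : Fin 2,
    (Finset.univ.filter fun y => hammingDist x y = 1 ∧ Col y = j).card = A (Col x) j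

/-- Fourier transform `â(v) = ∑_u a(u) (-1)^{⟨u,v⟩}`. -/
def fourierT {n : ℕ} (a : (Fin n → Bool) → ℚ) (v : Fin n → Bool) : ℚ :=
  ∑ u : Fin n → Bool, a u * (-1) ^ ((Finset.univ.filter fun i => u i = true ∧ v i = true).card)

/-- Coordinatewise XOR. -/
def xorv {n : ℕ} (u v : Fin n → Bool) : Fin n → Bool := fun i => xor (u i) (v i)

/-- Weight distribution `B_i(a) = (1/|S|) |{(u,v) ∈ S×S : wt(u⊕v) = i}|`. -/
def Bdist {n : ℕ} (S : Finset (Fin n → Bool)) (i : ℕ) : ℚ :=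
  (((S ×ˢ S).filter fun p => wt (xorv p.1 p.2) = i).card : ℚ) / (S.card : ℚ)

/-- Kravchuk polynomial `P_k(i) = ∑_{j=0}^k (-1)^j C(i,j) C(n-i,k-j)`. -/
def krav (n k i : ℕ) : ℚ :=
  ∑ j ∈ Finset.range (k + 1),
    (-1 : ℚ) ^ j * (Nat.choose i j : ℚ) * (Nat.choose (n - i) (k - j) : ℚ)

/-- MacWilliams transform `B'_k(a) = (1/|S|) ∑_{i=0}^n B_i(a) P_k(i)`. -/
def Bmw {n : ℕ} (S : Finset (Fin n → Bool)) (k : ℕ) : ℚ :=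
  (∑ i ∈ Finset.range (n + 1), Bdist S i * krav n k i) / (S.card : ℚ)


/-!
The Walsh functions `walsh v` diagonalise the adjacency operator of the cube: summing `f` over
the neighbours of `x` multiplies the `v`-th Walsh coefficient of `f` by `n - 2 wt v`. For a
perfect coloring the neighbour sum of `χ^S` is `(a₁₁ - a₀₁) χ^S + a₀₁`, so every nonzero Walsh
coefficient of `S` at `v ≠ 0` has `2 wt v = n - a₁₁ + a₀₁ = a₁₀ + a₀₁`, and one exists because
`S` is neither empty nor the whole cube. Since `S` is correlation-immune of order `m` exactly when
its Walsh coefficients vanish on the weights `1, …, m`, this gives `2 (cor S + 1) = a₁₀ + a₀₁`.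
Finally `nei S = a₁₁ = n - a₁₀`, and double counting the edges between `S` and its complement
gives `a₁₀ = (a₁₀ + a₀₁) (1 - ρ)`.
-/

def flipAt {n : ℕ} (i : Fin n) (x : Fin n → Bool) : Fin n → Bool :=
  Function.update x i (!x i)

def walsh {n : ℕ} (v x : Fin n → Bool) : ℚ :=
  ∏ i, if v i = true ∧ x i = true then -1 else 1

/-- `walsh v x = (-1)^⟨v,x⟩`, so `walshCoeff S = fourierT (chi S)`. -/
def walshCoeff {n : ℕ} (S : Finset (Fin n → Bool)) (v : Fin n → Bool) : ℚ :=
  ∑ x ∈ S, walsh v x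

def downset {n : ℕ} (y : Fin n → Bool) : Finset (Fin n → Bool) :=
  Fintype.piFinset fun i => if y i = true then univ else {false}

section Cube

variable {n : ℕ}

@[simp]
lemma flipAt_flipAt (i : Fin n) (x : Fin n → Bool) : flipAt i (flipAt i x) = x := by
  funext j
  by_cases h : j = i
  · subst h; simp [flipAt]
  · simp [flipAt, Function.update_of_ne h]

lemma flipAt_left_injective (x : Fin n → Bool) : Function.Injective (flipAt · x) := by
  intro i j h
  by_contra hij
  simpa [flipAt, Function.update_of_ne hij] using congrFun h i

lemma hammingDist_eq_one_iff {x y : Fin n → Bool} :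
    hammingDist x y = 1 ↔ ∃ i, flipAt i x = y := by
  simp only [hammingDist, card_eq_one, Finset.ext_iff, mem_filter, mem_univ, true_and,
    mem_singleton, funext_iff, flipAt, Function.update_apply]
  refine exists_congr fun i => forall_congr' fun j => ?_
  by_cases h : j = i
  · subst h; cases x j <;> cases y j <;> simp
  · simp [h]

lemma filter_hammingDist_eq_one (x : Fin n → Bool) :
    ({y | hammingDist x y = 1} : Finset (Fin n → Bool)) = univ.image (flipAt · x) := by
  ext y
  simp [hammingDist_eq_one_iff]

lemma card_filter_hammingDist_eq_one (x : Fin n → Bool) : #{y | hammingDist x y = 1} = n := by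
  rw [filter_hammingDist_eq_one x, card_image_of_injective _ (flipAt_left_injective x), card_univ,
    Fintype.card_fin]

lemma sum_comp_flipAt (i : Fin n) (f : (Fin n → Bool) → ℚ) :
    ∑ x, f (flipAt i x) = ∑ x, f x :=
  Equiv.sum_comp (Function.Involutive.toPerm _ (flipAt_flipAt i)) f

lemma wt_eq_zero_iff {v : Fin n → Bool} : wt v = 0 ↔ v = ⊥ := by
  simp [wt, funext_iff, filter_eq_empty_iff]

lemma walsh_comm (v x : Fin n → Bool) : walsh v x = walsh x v := by
  simp only [walsh, and_comm]

@[simp]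
lemma walsh_bot_left (x : Fin n → Bool) : walsh ⊥ x = 1 := by
  simp [walsh]

lemma walsh_mul_walsh (v x z : Fin n → Bool) : walsh v x * walsh v z = walsh v (xorv x z) := by
  rw [walsh, walsh, walsh, ← prod_mul_distrib]
  refine prod_congr rfl fun i _ => ?_
  cases v i <;> cases hx : x i <;> cases hz : z i <;> simp [xorv, hx, hz]

lemma walsh_flipAt (v : Fin n → Bool) (i : Fin n) (x : Fin n → Bool) :
    walsh v (flipAt i x) = (if v i = true then -1 else 1) * walsh v x := by
  rw [walsh, walsh, ← mul_prod_erase _ _ (mem_univ i), ← mul_prod_erase _ _ (mem_univ i),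
    ← mul_assoc]
  congr 1
  · simp only [flipAt, Function.update_self]
    cases v i <;> cases x i <;> simp
  · refine prod_congr rfl fun j hj => ?_
    rw [flipAt, Function.update_of_ne (ne_of_mem_erase hj)]

end Cube

section Walsh

variable {n : ℕ}

lemma wt_le (v : Fin n → Bool) : wt v ≤ n :=
  (card_filter_le _ _).trans_eq (card_fin n)

lemma wt_mono : Monotone (wt (n := n)) := fun v y h =>
  card_le_card fun i => by simpa using fun hi => Bool.le_iff_imp.1 (h i) hi

lemma mem_downset {v y : Fin n → Bool} : v ∈ downset y ↔ v ≤ y := by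
  simp only [downset, Fintype.mem_piFinset, Pi.le_def]
  refine forall_congr' fun i => ?_
  cases y i <;> cases v i <;> simp

lemma sum_walsh_downset (y w : Fin n → Bool) :
    ∑ v ∈ downset y, walsh v w = if ∀ i, y i = true → w i = false then 2 ^ wt y else 0 := by
  have hprod : ∑ v ∈ downset y, walsh v w = ∏ i, ∑ b ∈ (if y i = true then univ else {false}),
      (if b = true ∧ w i = true then (-1 : ℚ) else 1) := by
    rw [prod_univ_sum]; rfl
  have hfactor : ∀ i, ∑ b ∈ (if y i = true then univ else {false}),
      (if b = true ∧ w i = true then (-1 : ℚ) else 1) =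
      if y i = true then (if w i = true then 0 else 2) else 1 := by
    intro i
    cases y i <;> cases w i <;> norm_num
  simp only [hprod, hfactor]
  split_ifs with h
  · have h2 : ∀ i, (if y i = true then (if w i = true then (0 : ℚ) else 2) else 1) =
        if y i = true then 2 else 1 := fun i => by
      by_cases hy : y i = true <;> simp [hy, h i]
    simp only [h2, prod_ite, prod_const, one_pow, mul_one, wt]
  · push Not at h
    obtain ⟨i, hy, hw⟩ := h
    exact prod_eq_zero (mem_univ i) (by simp [hy, hw])

lemma sum_walsh (w : Fin n → Bool) : ∑ v, walsh v w = if w = ⊥ then 2 ^ n else 0 := by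
  have h := sum_walsh_downset ⊤ w
  have htop : downset (⊤ : Fin n → Bool) = univ := by
    ext v; simp [mem_downset]
  have hwt : wt (⊤ : Fin n → Bool) = n := by simp [wt]
  simpa [htop, hwt, funext_iff] using h

lemma sum_walsh_mul_walsh (x z : Fin n → Bool) :
    ∑ v, walsh v x * walsh v z = if x = z then 2 ^ n else 0 := by
  simp only [walsh_mul_walsh, sum_walsh]
  congr 1
  simp [xorv, funext_iff]

lemma sum_downset_walsh_mul_walsh (y x z : Fin n → Bool) :
    ∑ v ∈ downset y, walsh v x * walsh v z = if x ∈ face y z then 2 ^ wt y else 0 := by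
  simp only [walsh_mul_walsh, sum_walsh_downset]
  simp [face, xorv]

lemma sum_sign_eq_sub_two_mul_wt (v : Fin n → Bool) :
    ∑ i, (if v i = true then (-1 : ℚ) else 1) = n - 2 * wt v := by
  have h : ∀ i, (if v i = true then (-1 : ℚ) else 1) = 1 - 2 * (if v i = true then 1 else 0) :=
    fun i => by split_ifs <;> norm_num
  rw [sum_congr rfl fun i _ => h i, sum_sub_distrib, ← mul_sum, sum_boole]
  simp [wt]

lemma sum_walsh_mul_sum_flipAt (v : Fin n → Bool) (f : (Fin n → Bool) → ℚ) :
    ∑ x, walsh v x * ∑ i, f (flipAt i x) = (n - 2 * wt v) * ∑ x, walsh v x * f x := by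
  calc ∑ x, walsh v x * ∑ i, f (flipAt i x)
      = ∑ i, ∑ x, walsh v (flipAt i x) * f x := by
        simp only [mul_sum]
        rw [sum_comm]
        refine sum_congr rfl fun i _ => ?_
        rw [← sum_comp_flipAt i]
        simp only [flipAt_flipAt]
    _ = ∑ i, (if v i = true then -1 else 1) * ∑ x, walsh v x * f x := by
        simp only [walsh_flipAt, mul_assoc, ← mul_sum]
    _ = (n - 2 * wt v) * ∑ x, walsh v x * f x := by
        rw [← sum_mul, sum_sign_eq_sub_two_mul_wt]

end Walsh

section CorrelationImmunity

variable {n : ℕ} {S : Finset (Fin n → Bool)}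

@[simp]
lemma walshCoeff_bot (S : Finset (Fin n → Bool)) : walshCoeff S ⊥ = #S := by
  simp [walshCoeff]

lemma sum_walshCoeff_mul_walsh (S : Finset (Fin n → Bool)) (x : Fin n → Bool) :
    ∑ v, walshCoeff S v * walsh v x = if x ∈ S then 2 ^ n else 0 := by
  simp only [walshCoeff, sum_mul]
  rw [sum_comm]
  simp only [sum_walsh_mul_walsh, sum_ite_eq']

lemma card_eq_two_pow_of_walshCoeff_eq_zero (hS : S.Nonempty)
    (h : ∀ v ≠ ⊥, walshCoeff S v = 0) : #S = 2 ^ n := by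
  obtain ⟨x, hx⟩ := hS
  have hsum := sum_walshCoeff_mul_walsh S x
  rw [sum_eq_single ⊥ (fun v _ hv => by rw [h v hv, zero_mul]) (by simp), if_pos hx] at hsum
  exact_mod_cast (by simpa using hsum : (#S : ℚ) = 2 ^ n)

lemma card_face_inter_mul_two_pow (S : Finset (Fin n → Bool)) (y z : Fin n → Bool) :
    (#(face y z ∩ S) : ℚ) * 2 ^ wt y = ∑ v ∈ downset y, walshCoeff S v * walsh v z := by
  simp only [walshCoeff, sum_mul]
  rw [sum_comm]
  simp only [sum_downset_walsh_mul_walsh]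
  rw [← sum_filter, sum_const, nsmul_eq_mul, filter_mem_eq_inter, inter_comm]

lemma corrImmune_of_walshCoeff_eq_zero {m : ℕ}
    (h : ∀ v ≠ ⊥, wt v ≤ m → walshCoeff S v = 0) : CorrImmune S m := by
  have hface : ∀ y z, wt y = m → (#(face y z ∩ S) : ℚ) * 2 ^ m = #S := by
    intro y z hy
    rw [← hy, card_face_inter_mul_two_pow, sum_eq_single ⊥]
    · simp
    · intro v hv hne
      rw [h v hne (hy ▸ wt_mono (mem_downset.1 hv)), zero_mul]
    · simp [mem_downset]
  intro y₁ z₁ y₂ z₂ h₁ h₂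
  exact_mod_cast mul_right_cancel₀ (by positivity) ((hface y₁ z₁ h₁).trans (hface y₂ z₂ h₂).symm)

lemma walshCoeff_eq_zero_of_corrImmune {v y : Fin n → Bool} (h : CorrImmune S (wt y))
    (hv : v ≠ ⊥) (hvy : v ≤ y) : walshCoeff S v = 0 := by
  have hc : ∀ z, (#(face y z ∩ S) : ℚ) = #(face y ⊥ ∩ S) := fun z => by
    exact_mod_cast h y z y ⊥ rfl rfl
  have key : (2 : ℚ) ^ n * walshCoeff S v = 0 := calc
    (2 : ℚ) ^ n * walshCoeff S v
      = ∑ u ∈ downset y, walshCoeff S u * ∑ z, walsh z u * walsh z v := by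
        rw [sum_eq_single v]
        · simp [sum_walsh_mul_walsh, mul_comm]
        · intro u _ hu
          simp [sum_walsh_mul_walsh, hu]
        · simp [mem_downset, hvy]
    _ = ∑ z, walsh v z * ((#(face y z ∩ S) : ℚ) * 2 ^ wt y) := by
        simp only [card_face_inter_mul_two_pow, mul_sum]
        rw [sum_comm]
        refine sum_congr rfl fun z _ => sum_congr rfl fun u _ => ?_
        rw [walsh_comm z u, walsh_comm z v]
        ring
    _ = #(face y ⊥ ∩ S) * 2 ^ wt y * ∑ z, walsh z v := by
        simp only [hc, mul_sum, walsh_comm v]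
        refine sum_congr rfl fun z _ => ?_
        ring
    _ = 0 := by rw [sum_walsh, if_neg hv, mul_zero]
  exact (mul_eq_zero.1 key).resolve_left (by positivity)

lemma exists_le_wt_eq {v : Fin n → Bool} {m : ℕ} (hv : wt v ≤ m) (hm : m ≤ n) :
    ∃ y, v ≤ y ∧ wt y = m := by
  obtain ⟨s, hvs, -, hs⟩ :=
    exists_subsuperset_card_eq (subset_univ {i | v i = true}) hv (by simpa using hm)
  refine ⟨fun i => decide (i ∈ s), fun i => Bool.le_iff_imp.2 fun hi => ?_, by simpa [wt] using hs⟩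
  simpa using hvs (by simpa using hi)

lemma corrImmune_iff_walshCoeff_eq_zero {m : ℕ} (hm : m ≤ n) :
    CorrImmune S m ↔ ∀ v ≠ ⊥, wt v ≤ m → walshCoeff S v = 0 := by
  refine ⟨fun h v hv hvm => ?_, corrImmune_of_walshCoeff_eq_zero⟩
  obtain ⟨y, hvy, rfl⟩ := exists_le_wt_eq hvm hm
  exact walshCoeff_eq_zero_of_corrImmune h hv hvy

lemma cor_add_one_eq {v₀ : Fin n → Bool} (hv₀ : v₀ ≠ ⊥) (hW : walshCoeff S v₀ ≠ 0)
    (hmin : ∀ v ≠ ⊥, walshCoeff S v ≠ 0 → wt v₀ ≤ wt v) : cor S + 1 = wt v₀ := by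
  have hpos : 0 < wt v₀ := Nat.pos_of_ne_zero (wt_eq_zero_iff.not.2 hv₀)
  have hle := wt_le v₀
  have hset : {m | m ≤ n ∧ CorrImmune S m} = Set.Iic (wt v₀ - 1) := by
    ext m
    simp only [Set.mem_ofPred_eq, Set.mem_Iic]
    constructor
    · rintro ⟨hm, himm⟩
      by_contra! hlt
      exact hW ((corrImmune_iff_walshCoeff_eq_zero hm).1 himm v₀ hv₀ (by omega))
    · intro hm
      refine ⟨by omega, corrImmune_of_walshCoeff_eq_zero fun v hv hvm => ?_⟩
      by_contra hWv
      have := hmin v hv hWv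
      omega
  rw [cor, hset, csSup_Iic]
  omega

end CorrelationImmunity

section PerfectColoring

variable {n : ℕ} {S : Finset (Fin n → Bool)} {A : Fin 2 → Fin 2 → ℕ}

lemma chiCol_eq_one_iff {x : Fin n → Bool} : chiCol S x = 1 ↔ x ∈ S := by
  by_cases hx : x ∈ S <;> simp [chiCol, hx]

lemma chiCol_eq_zero_iff {x : Fin n → Bool} : chiCol S x = 0 ↔ x ∉ S := by
  by_cases hx : x ∈ S <;> simp [chiCol, hx]

lemma chiCol_of_mem {x : Fin n → Bool} (hx : x ∈ S) : chiCol S x = 1 := if_pos hx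

lemma chiCol_of_notMem {x : Fin n → Bool} (hx : x ∉ S) : chiCol S x = 0 := if_neg hx

namespace IsPerfectColoring

lemma card_neighbors_mem (hA : IsPerfectColoring (chiCol S) A) (x : Fin n → Bool) :
    #{y | hammingDist x y = 1 ∧ y ∈ S} = A (chiCol S x) 1 := by
  simp only [← hA x 1, chiCol_eq_one_iff]

lemma card_neighbors_notMem (hA : IsPerfectColoring (chiCol S) A) (x : Fin n → Bool) :
    #{y | hammingDist x y = 1 ∧ y ∉ S} = A (chiCol S x) 0 := by
  simp only [← hA x 0, chiCol_eq_zero_iff]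

lemma row_sum_eq (hA : IsPerfectColoring (chiCol S) A) (x : Fin n → Bool) :
    A (chiCol S x) 1 + A (chiCol S x) 0 = n := by
  rw [← hA.card_neighbors_mem, ← hA.card_neighbors_notMem, ← filter_filter, ← filter_filter,
    card_filter_add_card_filter_not, card_filter_hammingDist_eq_one]

lemma sum_chi_flipAt (hA : IsPerfectColoring (chiCol S) A) (x : Fin n → Bool) :
    ∑ i, chi S (flipAt i x) = ((A 1 1 : ℚ) - A 0 1) * chi S x + A 0 1 := by
  rw [← sum_image fun i _ j _ h => flipAt_left_injective x h, ← filter_hammingDist_eq_one]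
  simp only [chi, sum_boole, filter_filter, hA.card_neighbors_mem]
  by_cases hx : x ∈ S <;> simp [hx, chiCol]

lemma walshCoeff_eigen (hA : IsPerfectColoring (chiCol S) A) {v : Fin n → Bool} (hv : v ≠ ⊥) :
    ((n : ℚ) - 2 * wt v) * walshCoeff S v = ((A 1 1 : ℚ) - A 0 1) * walshCoeff S v := by
  have hW : walshCoeff S v = ∑ x, walsh v x * chi S x := by
    simp [walshCoeff, chi]
  have hzero : ∑ x, walsh v x = 0 := by
    simp only [walsh_comm v, sum_walsh, if_neg hv]
  rw [hW, ← sum_walsh_mul_sum_flipAt]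
  simp only [hA.sum_chi_flipAt, mul_add, sum_add_distrib, mul_left_comm _ ((A 1 1 : ℚ) - _),
    ← mul_sum, ← sum_mul, hzero, zero_mul, add_zero]

lemma two_mul_wt_eq (hA : IsPerfectColoring (chiCol S) A) {v : Fin n → Bool} (hv : v ≠ ⊥)
    (hW : walshCoeff S v ≠ 0) : 2 * wt v = A 1 0 + A 0 1 := by
  obtain ⟨x, hx⟩ := nonempty_of_sum_ne_zero hW
  have hdeg : (A 1 1 : ℚ) + A 1 0 = n := by exact_mod_cast chiCol_of_mem hx ▸ hA.row_sum_eq x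
  have heig := mul_right_cancel₀ hW (hA.walshCoeff_eigen hv)
  exact_mod_cast (by linarith : (2 * wt v : ℚ) = A 1 0 + A 0 1)

lemma nei_eq (hA : IsPerfectColoring (chiCol S) A) (hS : S.Nonempty) : nei S = A 1 1 := by
  have hball : ∀ x ∈ S, #{y ∈ S | hammingDist x y ≤ 1} = A 1 1 + 1 := by
    intro x hx
    have : S.filter (hammingDist x · ≤ 1) =
        insert x (univ.filter fun y => hammingDist x y = 1 ∧ y ∈ S) := by
      ext y
      simp only [mem_filter, mem_insert, mem_univ, true_and, Nat.le_one_iff_eq_zero_or_eq_one,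
        hammingDist_eq_zero, eq_comm (a := x)]
      constructor
      · rintro ⟨hy, rfl | h⟩ <;> simp_all
      · rintro (rfl | ⟨h, hy⟩) <;> simp_all
    rw [this, card_insert_of_notMem (by simp), hA.card_neighbors_mem, chiCol_of_mem hx]
  rw [nei, sum_congr rfl fun x hx => by rw [hball x hx]]
  have : (#S : ℚ) ≠ 0 := by exact_mod_cast hS.card_ne_zero
  simp only [sum_const, nsmul_eq_mul]
  field_simp
  push_cast
  ring

lemma card_mul_eq_card_compl_mul (hA : IsPerfectColoring (chiCol S) A) :
    #S * A 1 0 = #Sᶜ * A 0 1 := by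
  refine card_mul_eq_card_mul (fun x y => hammingDist x y = 1) (fun x hx => ?_) (fun y hy => ?_)
  · rw [← chiCol_of_mem hx, ← hA.card_neighbors_notMem]
    congr 1
    ext y
    simp [bipartiteAbove, and_comm]
  · rw [← chiCol_of_notMem (mem_compl.1 hy), ← hA.card_neighbors_mem]
    congr 1
    ext x
    simp [bipartiteBelow, and_comm, hammingDist_comm]

end IsPerfectColoring

end PerfectColoring

/-- For nonempty `S ⊆ E^n` with `ρ(S) ≤ 1/2`, if `χ^S` is a perfect
2-coloring then `nei(S) + 2(cor(S)+1)(1 - ρ(S)) = n`. -/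
theorem stmt2 {n : ℕ} (S : Finset (Fin n → Bool)) (hS : S.Nonempty) (hρ : rho S ≤ 1 / 2)
    (hperf : ∃ A : Fin 2 → Fin 2 → ℕ, IsPerfectColoring (chiCol S) A) :
    nei S + 2 * ((cor S : ℚ) + 1) * (1 - rho S) = (n : ℚ) := by
  obtain ⟨A, hA⟩ := hperf
  obtain ⟨v₀, hv₀, hW₀⟩ : ∃ v ≠ ⊥, walshCoeff S v ≠ 0 := by
    by_contra! h
    rw [rho, card_eq_two_pow_of_walshCoeff_eq_zero hS h] at hρ
    norm_num at hρ
  have hwt := hA.two_mul_wt_eq hv₀ hW₀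
  have hcor : cor S + 1 = wt v₀ :=
    cor_add_one_eq hv₀ hW₀ fun v hv hW => by linarith [hA.two_mul_wt_eq hv hW]
  obtain ⟨x, hx⟩ := hS
  have hdeg : A 1 1 + A 1 0 = n := chiCol_of_mem hx ▸ hA.row_sum_eq x
  have hcompl : #Sᶜ + #S = 2 ^ n := by simp [card_compl_add_card]
  have hedge := hA.card_mul_eq_card_compl_mul
  rw [hA.nei_eq ⟨x, hx⟩, rho, show (cor S : ℚ) + 1 = wt v₀ by exact_mod_cast hcor]
  qify at hdeg hcompl hedge hwt
  field_simp
  linear_combination (2 : ℚ) ^ n * hdeg - hedge + ((2 : ℚ) ^ n - #S) * hwt - (A 0 1 : ℚ) * hcompl
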